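/- Consider the naming protocol N_n on a set A of n agents in the Immediate Observation (IO) model, where each agent has integer variables my_id and max_id, both initially 1, and when an agent a_r is the reactor of an interaction with starter a_s: a_r increments my_id by 1 if a_s's my_id equals a_r's my_id, and a_r sets max_id to the maximum of its own my_id and max_id and a_s's my_id and max_id. Then, in every globally fair execution: (i) the maximum value M of max_id over all agents strictly increases at some later point if and only if, at the current point, two agents share the same value of my_id; and (ii) eventually the my_id values of the agents are pairwise distinct, stable forever after, and equal exactly to {1, 2, ..., n}; in particular when M = n each agent has a unique stable value of my_id. -/

import Mathlib

/-- An interaction: an ordered pair of distinct agents (starter, reactor). -/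
structure Interaction (n : ℕ) where
  s : Fin n
  r : Fin n
  ne : s ≠ r

/-- Apply a transition rule via an interaction to a configuration. -/
def applyRule {n : ℕ} {Q : Type*} (rule : Q → Q → Q × Q)
    (i : Interaction n) (C : Fin n → Q) : Fin n → Q := fun a =>
  if a = i.s then (rule (C i.s) (C i.r)).1
  else if a = i.r then (rule (C i.s) (C i.r)).2
  else C a

/-- The execution induced by a step function and an initial configuration. -/
def execWith {n : ℕ} {Q : Type*} (step : ℕ → (Fin n → Q) → (Fin n → Q))
    (C0 : Fin n → Q) : ℕ → Fin n → Q
  | 0 => C0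
  | m + 1 => step m (execWith step C0 m)

/-- A set of configurations is closed if it is invariant under permuting the agents. -/
def PermClosed {n : ℕ} {Q : Type*} (S : Set (Fin n → Q)) : Prop :=
  ∀ C ∈ S, ∀ σ : Equiv.Perm (Fin n), (C ∘ σ) ∈ S

/-- Global fairness (set-based) of an execution, relative to a one-step reachability
relation `canStep`. -/
def GloballyFair {n : ℕ} {Q : Type*}
    (canStep : (Fin n → Q) → (Fin n → Q) → Prop) (Γ : ℕ → Fin n → Q) : Prop :=
  ∀ S S' : Set (Fin n → Q), PermClosed S → PermClosed S' →
    (∀ C ∈ S, ∃ C' ∈ S', canStep C C') →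
    {m | Γ m ∈ S}.Infinite → {m | Γ m ∈ S'}.Infinite

/-- One-step reachability in the two-way (non-omissive) model with rule `δ`. -/
def TWStep {n : ℕ} {Q : Type*} (δ : Q → Q → Q × Q) (C C' : Fin n → Q) : Prop :=
  ∃ i : Interaction n, C' = applyRule δ i C
/-- The transition rule of the naming protocol `N_n` in the IO model. Each agent's
state is the pair `(my_id, max_id)`. The starter's state never changes; the reactor
increments `my_id` if the starter's `my_id` equals its own, and updates `max_id` to the
maximum of its (updated) `my_id`, its `max_id`, and the starter's `my_id` and
`max_id`. -/
def nameRule : ℕ × ℕ → ℕ × ℕ → (ℕ × ℕ) × (ℕ × ℕ) := fun s r =>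
  (s, (if s.1 = r.1 then r.1 + 1 else r.1,
       max (max (if s.1 = r.1 then r.1 + 1 else r.1) r.2) (max s.1 s.2)))

/-!
The `my_id`s of a reachable configuration always form an interval `{1, …, K}`: an agent moves
from `v` to `v + 1` only when its starter keeps `v`. Every `max_id` lies between its agent's
`my_id` and `K`, so the maximum `M` of the `max_id`s is `K`, the number of distinct `my_id`s.
Hence `M ≤ n`, with equality exactly when the `my_id`s are pairwise distinct, and from then on
no interaction changes a `my_id`. Global fairness forces this to happen: the sum of the `my_id`s
never decreases and is bounded by `n²`, while from a configuration with a repeated `my_id` a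
single interaction increases it.
-/

open Finset Function

theorem execWith_induction {n : ℕ} {Q : Type*} {step : ℕ → (Fin n → Q) → Fin n → Q}
    {C0 : Fin n → Q} {P : (Fin n → Q) → Prop} (hP : ∀ m C, P C → P (step m C)) {m m' : ℕ}
    (hmm' : m ≤ m') (h : P (execWith step C0 m)) : P (execWith step C0 m') := by
  induction m', hmm' using Nat.le_induction with
  | base => exact h
  | succ k _ ih => exact hP k _ ih

theorem GloballyFair.finite_setOf_of_potential {n : ℕ} {Q : Type*}
    {canStep : (Fin n → Q) → (Fin n → Q) → Prop} {Γ : ℕ → Fin n → Q}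
    (hGF : GloballyFair canStep Γ) {φ : (Fin n → Q) → ℕ} {P : (Fin n → Q) → Prop}
    (hφ : ∀ C (σ : Equiv.Perm (Fin n)), φ (C ∘ σ) = φ C)
    (hP : ∀ C (σ : Equiv.Perm (Fin n)), P C → P (C ∘ σ))
    (hmono : Monotone fun m => φ (Γ m)) (hbdd : BddAbove (Set.range fun m => φ (Γ m)))
    (hstep : ∀ C, P C → ∃ C', canStep C C' ∧ φ C < φ C') :
    {m | P (Γ m)}.Finite := by
  obtain ⟨m₀, hm₀⟩ := Nat.sSup_mem (Set.range_nonempty fun m => φ (Γ m)) hbdd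
  set s := sSup (Set.range fun m => φ (Γ m))
  have hle : ∀ m, φ (Γ m) ≤ s := fun m => le_csSup hbdd (Set.mem_range_self m)
  have hS : PermClosed {C | P C ∧ φ C = s} := fun C hC σ => ⟨hP C σ hC.1, (hφ C σ).trans hC.2⟩
  have hS' : PermClosed {C | s < φ C} := fun C hC σ => show s < φ (C ∘ σ) by rw [hφ]; exact hC
  -- the potential never exceeds its maximum `s`, so the target set is never visited
  have hfin : {m | Γ m ∈ {C | P C ∧ φ C = s}}.Finite := by
    by_contra hinf
    have hS'_inf := hGF _ _ hS hS' (fun C hC => ?_) hinf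
    · obtain ⟨m, hm⟩ := hS'_inf.nonempty
      exact (hle m).not_gt hm
    · obtain ⟨C', hC', hlt⟩ := hstep C hC.1
      exact ⟨C', hC.2 ▸ hlt, hC'⟩
  refine ((Set.finite_Iio m₀).union hfin).subset fun m hm => ?_
  rcases lt_or_ge m m₀ with h | h
  · exact Or.inl h
  · exact Or.inr ⟨hm, le_antisymm (hle m) (hm₀ ▸ hmono h)⟩

namespace NamingProtocol

variable {n : ℕ}

section Step

variable (i : Interaction n) (C : Fin n → ℕ × ℕ)

theorem applyRule_of_ne_reactor {a : Fin n} (ha : a ≠ i.r) :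
    applyRule nameRule i C a = C a := by
  by_cases has : a = i.s
  · subst has
    simp [applyRule, nameRule]
  · simp [applyRule, has, ha]

theorem applyRule_reactor : applyRule nameRule i C i.r = (nameRule (C i.s) (C i.r)).2 := by
  simp [applyRule, i.ne.symm]

theorem fst_applyRule (a : Fin n) :
    (applyRule nameRule i C a).1 =
      if a = i.r ∧ (C i.s).1 = (C i.r).1 then (C i.r).1 + 1 else (C a).1 := by
  by_cases ha : a = i.r
  · subst ha
    rw [applyRule_reactor]
    by_cases h : (C i.s).1 = (C i.r).1 <;> simp [nameRule, h]
  · simp [applyRule_of_ne_reactor i C ha, ha]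

theorem snd_applyRule_reactor :
    (applyRule nameRule i C i.r).2 =
      max (max (applyRule nameRule i C i.r).1 (C i.r).2) (max (C i.s).1 (C i.s).2) := by
  rw [applyRule_reactor]
  rfl

theorem fst_le_fst_applyRule (a : Fin n) : (C a).1 ≤ (applyRule nameRule i C a).1 := by
  rw [fst_applyRule]
  split_ifs with h
  · rw [h.1]
    exact Nat.le_succ _
  · exact le_rfl

theorem fst_applyRule_eq_or (a : Fin n) :
    (applyRule nameRule i C a).1 = (C a).1 ∨
      (applyRule nameRule i C a).1 = (applyRule nameRule i C i.s).1 + 1 := by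
  rw [fst_applyRule, applyRule_of_ne_reactor i C i.ne]
  split_ifs with h
  · exact Or.inr (by rw [h.2])
  · exact Or.inl rfl

theorem exists_fst_applyRule_eq (b : Fin n) : ∃ b', (applyRule nameRule i C b').1 = (C b).1 := by
  by_cases h : b = i.r ∧ (C i.s).1 = (C i.r).1
  · exact ⟨i.s, by rw [applyRule_of_ne_reactor i C i.ne, h.1, h.2]⟩
  · exact ⟨b, by rw [fst_applyRule, if_neg h]⟩

theorem fst_applyRule_of_injective (h : Injective fun a => (C a).1) (a : Fin n) :
    (applyRule nameRule i C a).1 = (C a).1 := by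
  rw [fst_applyRule, if_neg fun hc => i.ne (h hc.2)]

theorem sum_fst_lt_sum_fst_applyRule {a b : Fin n} (hab : a ≠ b) (he : (C a).1 = (C b).1) :
    ∑ c, (C c).1 < ∑ c, (applyRule nameRule ⟨a, b, hab⟩ C c).1 :=
  sum_lt_sum (fun c _ => fst_le_fst_applyRule _ C c)
    ⟨b, mem_univ b, by rw [fst_applyRule]; simp [he]⟩

end Step

structure NamingInvariant (C : Fin n → ℕ × ℕ) : Prop where
  one_le_fst : ∀ a, 1 ≤ (C a).1
  exists_fst_add_one_eq : ∀ a, 2 ≤ (C a).1 → ∃ b, (C b).1 + 1 = (C a).1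
  fst_le_snd : ∀ a, (C a).1 ≤ (C a).2
  snd_le_sup_fst : ∀ a, (C a).2 ≤ univ.sup fun b => (C b).1

theorem namingInvariant_init : NamingInvariant fun _ : Fin n => ((1, 1) : ℕ × ℕ) where
  one_le_fst _ := le_rfl
  exists_fst_add_one_eq _ h := absurd h (by decide)
  fst_le_snd _ := le_rfl
  snd_le_sup_fst a := le_sup (f := fun _ => 1) (mem_univ a)

namespace NamingInvariant

variable {C : Fin n → ℕ × ℕ} (hC : NamingInvariant C)
include hC

theorem applyRule_nameRule (i : Interaction n) : NamingInvariant (applyRule nameRule i C) := by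
  have hfst : ∀ b, (C b).1 ≤ univ.sup fun b => (applyRule nameRule i C b).1 := fun b =>
    (fst_le_fst_applyRule i C b).trans (le_sup (f := fun b => (applyRule nameRule i C b).1)
      (mem_univ b))
  have hsnd : ∀ b, (C b).2 ≤ univ.sup fun b => (applyRule nameRule i C b).1 := fun b =>
    (hC.snd_le_sup_fst b).trans (Finset.sup_le fun c _ => hfst c)
  refine ⟨fun a => (hC.one_le_fst a).trans (fst_le_fst_applyRule i C a), fun a ha => ?_,
    fun a => ?_, fun a => ?_⟩
  · rcases fst_applyRule_eq_or i C a with h | h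
    · obtain ⟨b, hb⟩ := hC.exists_fst_add_one_eq a (h ▸ ha)
      obtain ⟨b', hb'⟩ := exists_fst_applyRule_eq i C b
      exact ⟨b', by rw [hb', hb, h]⟩
    · exact ⟨i.s, h.symm⟩
  · by_cases ha : a = i.r
    · subst ha
      rw [snd_applyRule_reactor]
      exact le_max_of_le_left (le_max_left _ _)
    · rw [applyRule_of_ne_reactor i C ha]
      exact hC.fst_le_snd a
  · by_cases ha : a = i.r
    · subst ha
      rw [snd_applyRule_reactor]
      exact max_le (max_le (le_sup (f := fun b => (applyRule nameRule i C b).1) (mem_univ _))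
        (hsnd _)) (max_le (hfst _) (hsnd _))
    · rw [applyRule_of_ne_reactor i C ha]
      exact hsnd a

theorem exists_fst_eq {a : Fin n} {j : ℕ} (hj : 1 ≤ j) (hja : j ≤ (C a).1) :
    ∃ b, (C b).1 = j := by
  obtain ⟨k, hk⟩ := Nat.exists_eq_add_of_le hja
  induction k generalizing a with
  | zero => exact ⟨a, hk⟩
  | succ k ih =>
    obtain ⟨b, hb⟩ := hC.exists_fst_add_one_eq a (by omega)
    exact ih (a := b) (by omega) (by omega)

theorem image_fst_eq_Icc :
    univ.image (fun a => (C a).1) = Icc 1 (univ.sup fun a => (C a).1) := by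
  ext j
  simp only [mem_image, mem_univ, true_and, mem_Icc]
  constructor
  · rintro ⟨a, rfl⟩
    exact ⟨hC.one_le_fst a, le_sup (f := fun a => (C a).1) (mem_univ a)⟩
  · rintro ⟨hj, hjK⟩
    obtain ⟨a, -, ha⟩ := (Finset.le_sup_iff hj).1 hjK
    exact hC.exists_fst_eq hj ha

theorem sup_snd_eq_sup_fst :
    (univ.sup fun a => (C a).2) = univ.sup fun a => (C a).1 :=
  le_antisymm (Finset.sup_le fun a _ => hC.snd_le_sup_fst a)
    (sup_mono_fun fun a _ => hC.fst_le_snd a)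

theorem sup_snd_eq_card_image :
    (univ.sup fun a => (C a).2) = #(univ.image fun a => (C a).1) := by
  rw [hC.image_fst_eq_Icc, Nat.card_Icc, hC.sup_snd_eq_sup_fst, Nat.add_sub_cancel]

theorem sup_snd_le : (univ.sup fun a => (C a).2) ≤ n := by
  rw [hC.sup_snd_eq_card_image]
  exact card_image_le.trans_eq (card_fin n)

theorem sup_snd_eq_iff_injective :
    (univ.sup fun a => (C a).2) = n ↔ Injective fun a => (C a).1 := by
  rw [hC.sup_snd_eq_card_image, ← Set.injOn_univ, ← coe_univ, ← card_image_iff, card_fin]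

theorem fst_le (a : Fin n) : (C a).1 ≤ n :=
  (le_sup (f := fun a => (C a).1) (mem_univ a)).trans (hC.sup_snd_eq_sup_fst ▸ hC.sup_snd_le)

theorem image_fst_eq_Icc_of_injective (h : Injective fun a => (C a).1) :
    univ.image (fun a => (C a).1) = Icc 1 n := by
  rw [hC.image_fst_eq_Icc, ← hC.sup_snd_eq_sup_fst, hC.sup_snd_eq_iff_injective.2 h]

end NamingInvariant

abbrev namingExec (I : ℕ → Interaction n) (C0 : Fin n → ℕ × ℕ) : ℕ → Fin n → ℕ × ℕ :=
  execWith (fun m C => applyRule nameRule (I m) C) C0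

variable {I : ℕ → Interaction n} {C0 : Fin n → ℕ × ℕ}

theorem namingInvariant_namingExec (hC0 : NamingInvariant C0) (m : ℕ) :
    NamingInvariant (namingExec I C0 m) :=
  execWith_induction (fun k _ hC => hC.applyRule_nameRule (I k)) (Nat.zero_le m) hC0

theorem fst_namingExec_eq_of_injective {m m' : ℕ} (hmm' : m ≤ m')
    (h : Injective fun a => (namingExec I C0 m a).1) (a : Fin n) :
    (namingExec I C0 m' a).1 = (namingExec I C0 m a).1 := by
  refine execWith_induction (P := fun C : Fin n → ℕ × ℕ => ∀ a, (C a).1 = (namingExec I C0 m a).1)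
    (fun k C hC a => ?_) hmm' (fun _ => rfl) a
  have hinj : Injective fun a => (C a).1 := fun x y hxy => h (by simpa only [hC] using hxy)
  exact (fst_applyRule_of_injective _ C hinj a).trans (hC a)

theorem exists_injective_of_globallyFair (hC0 : NamingInvariant C0)
    (hGF : GloballyFair (TWStep nameRule) (namingExec I C0)) :
    ∃ m, Injective fun a => (namingExec I C0 m a).1 := by
  have hbdd : ∀ m, ∑ a, (namingExec I C0 m a).1 ≤ n * n := fun m =>
    (sum_le_card_nsmul _ _ n fun a _ => (namingInvariant_namingExec hC0 m).fst_le a).trans_eq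
      (by simp)
  have hfin := hGF.finite_setOf_of_potential (φ := fun C => ∑ a, (C a).1)
    (P := fun C => ¬Injective fun a => (C a).1)
    (fun (C : Fin n → ℕ × ℕ) σ => Equiv.sum_comp σ fun a => (C a).1)
    (fun C σ hC hσ => hC ((Equiv.injective_comp σ _).1 hσ))
    (monotone_nat_of_le_succ fun m => sum_le_sum fun a _ => fst_le_fst_applyRule _ _ a)
    ⟨n * n, Set.forall_mem_range.2 hbdd⟩
    (fun C hC => by
      obtain ⟨a, b, he, hab⟩ := not_injective_iff.1 hC
      exact ⟨_, ⟨⟨a, b, hab⟩, rfl⟩, sum_fst_lt_sum_fst_applyRule C hab he⟩)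
  obtain ⟨m, hm⟩ := hfin.infinite_compl.nonempty
  exact ⟨m, not_not.1 hm⟩

end NamingProtocol

open NamingProtocol

theorem naming_protocol_correct_general (n : ℕ) (I : ℕ → Interaction n)
    (Γ : ℕ → Fin n → ℕ × ℕ)
    (hΓ : Γ = execWith (fun m C => applyRule nameRule (I m) C) (fun _ => (1, 1)))
    (hGF : GloballyFair (TWStep nameRule) Γ) :
    (∀ m : ℕ,
      (∃ m', m ≤ m' ∧ (Finset.univ.sup fun a => (Γ m a).2)
          < (Finset.univ.sup fun a => (Γ m' a).2)) ↔
        ∃ a b : Fin n, a ≠ b ∧ (Γ m a).1 = (Γ m b).1) ∧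
    (∃ m : ℕ, (∀ m', m ≤ m' → ∀ a, (Γ m' a).1 = (Γ m a).1) ∧
      Function.Injective (fun a : Fin n => (Γ m a).1) ∧
      (Finset.univ.image fun a : Fin n => (Γ m a).1) = Finset.Icc 1 n) ∧
    (∀ m : ℕ, (Finset.univ.sup fun a => (Γ m a).2) = n →
      Function.Injective (fun a : Fin n => (Γ m a).1) ∧
      ∀ m', m ≤ m' → ∀ a, (Γ m' a).1 = (Γ m a).1) := by
  obtain rfl : Γ = namingExec I fun _ => (1, 1) := hΓ
  have hinv := namingInvariant_namingExec (I := I) namingInvariant_init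
  have hM_le := fun m => (hinv m).sup_snd_le
  have hM_eq := fun m => (hinv m).sup_snd_eq_iff_injective
  obtain ⟨m₁, hm₁⟩ := exists_injective_of_globallyFair namingInvariant_init hGF
  refine ⟨fun m => ⟨?_, ?_⟩, ⟨m₁, fun m' h => fst_namingExec_eq_of_injective h hm₁, hm₁,
    (hinv m₁).image_fst_eq_Icc_of_injective hm₁⟩, fun m hm => ?_⟩
  · rintro ⟨m', -, hlt⟩
    by_contra! hdistinct
    have hinj : Injective fun a => (namingExec I (fun _ => (1, 1)) m a).1 :=
      fun a b he => by_contra fun hab => hdistinct a b hab he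
    exact (hlt.trans_le (hM_le m')).ne ((hM_eq m).2 hinj)
  · rintro ⟨a, b, hab, he⟩
    have hlt : _ < n := (hM_le m).lt_of_ne fun h => hab ((hM_eq m).1 h he)
    have hinj := funext (fst_namingExec_eq_of_injective (le_max_right m m₁) hm₁) ▸ hm₁
    exact ⟨max m m₁, le_max_left m m₁, ((hM_eq _).2 hinj).symm ▸ hlt⟩
  · have hinj := (hM_eq m).1 hm
    exact ⟨hinj, fun m' h => fst_namingExec_eq_of_injective h hinj⟩

/-- Correctness of the naming protocol `N_n`: in every globally fair execution from the
all-`(1,1)` initial configuration, (i) the maximum value `M` of `max_id` strictly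
increases at some later point iff two agents currently share the same `my_id`;
(ii) eventually the `my_id`s are pairwise distinct, stable forever after, and equal
exactly to `{1, …, n}`; and (iii) when `M = n`, each agent already has a unique stable
value of `my_id`. -/
theorem naming_protocol_correct (n : ℕ) (hn : 1 ≤ n) (I : ℕ → Interaction n)
    (Γ : ℕ → Fin n → ℕ × ℕ)
    (hΓ : Γ = execWith (fun m C => applyRule nameRule (I m) C) (fun _ => (1, 1)))
    (hGF : GloballyFair (TWStep nameRule) Γ) :
    (∀ m : ℕ,
      (∃ m', m ≤ m' ∧ (Finset.univ.sup fun a => (Γ m a).2)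
          < (Finset.univ.sup fun a => (Γ m' a).2)) ↔
        ∃ a b : Fin n, a ≠ b ∧ (Γ m a).1 = (Γ m b).1) ∧
    (∃ m : ℕ, (∀ m', m ≤ m' → ∀ a, (Γ m' a).1 = (Γ m a).1) ∧
      Function.Injective (fun a : Fin n => (Γ m a).1) ∧
      (Finset.univ.image fun a : Fin n => (Γ m a).1) = Finset.Icc 1 n) ∧
    (∀ m : ℕ, (Finset.univ.sup fun a => (Γ m a).2) = n →
      Function.Injective (fun a : Fin n => (Γ m a).1) ∧
      ∀ m', m ≤ m' → ∀ a, (Γ m' a).1 = (Γ m a).1) :=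
  naming_protocol_correct_general n I Γ hΓ hGF
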